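/- arXiv:2212.05607 — 3 statements merged into one kernel-verified Lean document; each statement's English description precedes it below -/
import Mathlib

section
/- Let M ⊂ ℝ^d be compact, r > 0, and let Σ be an r-minimizer for M with H^1(Σ) > 0. Then Σ is Ahlfors regular: there exist constants C₁, C₂ > 0 and a radius ε₀ > 0 such that C₁·ε ≤ H^1(Σ ∩ B_ε(x)) ≤ C₂·ε for every x ∈ Σ and every 0 < ε < ε₀, where B_ε(x) is the open Euclidean ball of radius ε centered at x. -/
/-!
Lower bound: `S` is connected and contains two points at distance `≥ ε`, so some point of `S`
lies at distance `≥ ε / 2` from `x`, and the `1`-Lipschitz map `w ↦ dist w x` sends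
`S ∩ closedBall x (ε / 2)` onto an interval of length `ε / 2`.

Upper bound: for `t ≤ r / 4`, cut `S ∩ ball x (2 * t)` out of `S`, put in a finite star of spokes
of length `4 * t` at `x`, and reconnect to it every component of `S \ ball x (2 * t)` that leaves
`closedBall x (3 * t)`. By boundary bumping each such component reaches the sphere of radius
`2 * t`, hence has length `≥ t` inside `closedBall x (3 * t)`, so the reconnecting segments cost
at most `μH[1] (S ∩ closedBall x (3 * t)) / 6`. Minimality of `S` gives
`μH[1] (S ∩ closedBall x t) ≤ C * t + μH[1] (S ∩ closedBall x (3 * t)) / 6`, and iterating this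
from the bound `μH[1] S < ∞` yields a linear bound.
-/

open MeasureTheory Metric Set Filter EuclideanGeometry Asymptotics

noncomputable section

/-- Euclidean space ℝ^d. -/
abbrev Euc (d : ℕ) := EuclideanSpace ℝ (Fin d)

/-- The energy `F_M(S) = max_{y ∈ M} dist(y, S)`. -/
noncomputable def FM {d : ℕ} (M S : Set (Euc d)) : ℝ :=
  sSup ((fun y => Metric.infDist y S) '' M)

/-- `S` is an `r`-minimizer for `M`: a compact connected set with `F_M(S) ≤ r`
of minimal one-dimensional Hausdorff measure among all such sets. -/
def IsRMinimizer {d : ℕ} (M : Set (Euc d)) (r : ℝ) (S : Set (Euc d)) : Prop :=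
  IsCompact S ∧ IsConnected S ∧ FM M S ≤ r ∧
    ∀ S' : Set (Euc d), IsCompact S' → IsConnected S' → FM M S' ≤ r → μH[1] S ≤ μH[1] S'

/-- `S` is a maximal distance minimizer for `(M, l)`: a compact connected set of
one-dimensional Hausdorff measure at most `l` minimizing `F_M` among all such sets. -/
def IsMDM {d : ℕ} (M : Set (Euc d)) (l : ℝ) (S : Set (Euc d)) : Prop :=
  IsCompact S ∧ IsConnected S ∧ μH[1] S ≤ ENNReal.ofReal l ∧
    ∀ S' : Set (Euc d), IsCompact S' → IsConnected S' → μH[1] S' ≤ ENNReal.ofReal l →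
      FM M S ≤ FM M S'

open scoped ENNReal

section Topology

variable {α : Type*} [TopologicalSpace α]

theorem IsCompact.connectedComponentIn {K : Set α} (hK : IsCompact K) (x : α) :
    IsCompact (connectedComponentIn K x) := by
  by_cases hx : x ∈ K
  · have := isCompact_iff_compactSpace.mp hK
    rw [connectedComponentIn_eq_image hx]
    exact isClosed_connectedComponent.isCompact.image continuous_subtype_val
  · rw [connectedComponentIn_eq_empty hx]
    exact isCompact_empty

theorem isPreconnected_union_biUnion {ι : Type*} {x : α} {s : Set α} {I : Set ι}
    {t : ι → Set α} (hx : x ∈ s) (hs : IsPreconnected s) (ht : ∀ i ∈ I, IsPreconnected (t i))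
    (hst : ∀ i ∈ I, (s ∩ t i).Nonempty) : IsPreconnected (s ∪ ⋃ i ∈ I, t i) := by
  refine isPreconnected_of_forall x fun y hy => ?_
  rcases hy with hy | hy
  · exact ⟨s, subset_union_left, hx, hy, hs⟩
  · obtain ⟨i, hi, hy⟩ := mem_iUnion₂.mp hy
    exact ⟨s ∪ t i, union_subset_union_right _ (subset_biUnion_of_mem hi), Or.inl hx, Or.inr hy,
      hs.union' (hst i hi) (ht i hi)⟩

variable [T2Space α]

/- Connected components of a compact Hausdorff space are quasi-components. -/
theorem exists_isClopen_mem_disjoint_of_disjoint_connectedComponent [CompactSpace α]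
    {F : Set α} (hF : IsClosed F) {z : α} (hz : Disjoint (connectedComponent z) F) :
    ∃ V, IsClopen V ∧ z ∈ V ∧ Disjoint V F := by
  have hFc : IsClosed (ConnectedComponents.mk '' F) :=
    (hF.isCompact.image ConnectedComponents.continuous_coe).isClosed
  have hzF : ConnectedComponents.mk z ∉ ConnectedComponents.mk '' F := by
    rintro ⟨w, hwF, hw⟩
    exact disjoint_left.mp hz (ConnectedComponents.coe_eq_coe'.mp hw) hwF
  obtain ⟨V, hV, hzV, hVF⟩ := compact_exists_isClopen_in_isOpen hFc.isOpen_compl hzF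
  exact ⟨ConnectedComponents.mk ⁻¹' V, hV.preimage ConnectedComponents.continuous_coe, hzV,
    disjoint_left.mpr fun w hwV hwF => hVF hwV ⟨w, hwF, rfl⟩⟩

/-- The boundary bumping theorem. -/
theorem connectedComponentIn_diff_inter_closure_nonempty {S U : Set α}
    (hS : IsPreconnected S) (hSc : IsCompact S) (hU : IsOpen U) (hSU : (S ∩ U).Nonempty)
    {z : α} (hz : z ∈ S \ U) : (connectedComponentIn (S \ U) z ∩ closure U).Nonempty := by
  by_contra hempty
  rw [not_nonempty_iff_eq_empty, ← disjoint_iff_inter_eq_empty,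
    connectedComponentIn_eq_image hz] at hempty
  have := isCompact_iff_compactSpace.mp (hSc.diff hU)
  obtain ⟨V, hV, hzV, hVU⟩ := exists_isClopen_mem_disjoint_of_disjoint_connectedComponent
    (isClosed_closure.preimage continuous_subtype_val)
    (disjoint_left.mpr fun w hw hwU => disjoint_left.mp hempty (mem_image_of_mem _ hw) hwU)
  obtain ⟨O, hO, hOV⟩ := isOpen_induced_iff.mp hV.isOpen
  have hVc : IsClosed ((↑) '' V : Set α) :=
    (hV.isClosed.isCompact.image continuous_subtype_val).isClosed
  have hcover : S ⊆ (O \ closure U) ∪ ((↑) '' V)ᶜ := by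
    rintro w hwS
    by_cases hwV : w ∈ ((↑) '' V : Set α)
    · obtain ⟨v, hv, rfl⟩ := hwV
      exact Or.inl ⟨(hOV.symm ▸ hv : v ∈ (↑) ⁻¹' O), disjoint_left.mp hVU hv⟩
    · exact Or.inr hwV
  have hdisj : S ∩ ((O \ closure U) ∩ ((↑) '' V)ᶜ) = ∅ := by
    refine eq_empty_of_forall_notMem fun w ⟨hwS, ⟨hwO, hwU⟩, hwV⟩ => hwV ?_
    have hwK : w ∈ S \ U := ⟨hwS, fun h => hwU (subset_closure h)⟩
    exact ⟨⟨w, hwK⟩, hOV ▸ (hwO : (⟨w, hwK⟩ : ↥(S \ U)) ∈ (↑) ⁻¹' O), rfl⟩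
  rcases isPreconnected_iff_subset_of_disjoint.mp hS _ _ (hO.sdiff isClosed_closure)
    hVc.isOpen_compl hcover hdisj with h | h
  · obtain ⟨y, hyS, hyU⟩ := hSU
    exact (h hyS).2 (subset_closure hyU)
  · exact h hz.1 ⟨⟨z, hz⟩, hzV, rfl⟩

end Topology

section MeasureCounting

variable {ι α : Type*} [MeasurableSpace α] {μ : Measure α} {f : ι → Set α} {A : Set α}
  {c : ℝ≥0∞}

theorem Set.PairwiseDisjoint.card_mul_le_measure {F : Finset ι}
    (hd : (F : Set ι).PairwiseDisjoint f) (hm : ∀ i ∈ F, MeasurableSet (f i))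
    (hc : ∀ i ∈ F, c ≤ μ (f i)) (hA : ∀ i ∈ F, f i ⊆ A) : F.card * c ≤ μ A :=
  calc F.card * c = ∑ _i ∈ F, c := by rw [Finset.sum_const, nsmul_eq_mul]
    _ ≤ ∑ i ∈ F, μ (f i) := Finset.sum_le_sum hc
    _ = μ (⋃ i ∈ F, f i) := (measure_biUnion_finset hd hm).symm
    _ ≤ μ A := measure_mono (iUnion₂_subset hA)

theorem Set.PairwiseDisjoint.finite_of_le_measure {s : Set ι} (hd : s.PairwiseDisjoint f)
    (hm : ∀ i ∈ s, MeasurableSet (f i)) (hc0 : c ≠ 0) (hc : ∀ i ∈ s, c ≤ μ (f i))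
    (hA : ∀ i ∈ s, f i ⊆ A) (hAfin : μ A ≠ ⊤) : s.Finite := by
  by_contra hinf
  obtain ⟨n, hn⟩ := ENNReal.exists_nat_mul_gt hc0 hAfin
  obtain ⟨F, hFs, rfl⟩ := Set.Infinite.exists_subset_card_eq hinf n
  exact hn.not_ge <| (hd.subset hFs).card_mul_le_measure (fun i hi => hm i (hFs hi))
    (fun i hi => hc i (hFs hi)) fun i hi => hA i (hFs hi)

theorem measure_inter_le_of_le_measure_diff_add {s u : Set α} {a : ℝ≥0∞} (hu : MeasurableSet u)
    (hsu : μ (s \ u) ≠ ⊤) (h : μ s ≤ μ (s \ u) + a) : μ (s ∩ u) ≤ a := by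
  rw [← measure_inter_add_sdiff s hu, add_comm] at h
  exact (ENNReal.add_le_add_iff_left hsu).mp h

end MeasureCounting

section MetricMeasure

variable {E : Type*} [MetricSpace E]

theorem exists_mem_connectedComponentIn_diff_ball_dist_eq {S : Set E} {x : E} {ρ : ℝ}
    (hS : IsPreconnected S) (hSc : IsCompact S) (hx : x ∈ S) (hρ : 0 < ρ) {z : E}
    (hz : z ∈ S \ ball x ρ) :
    ∃ p ∈ connectedComponentIn (S \ ball x ρ) z, dist p x = ρ := by
  obtain ⟨p, hpC, hpU⟩ := connectedComponentIn_diff_inter_closure_nonempty hS hSc isOpen_ball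
    ⟨x, hx, mem_ball_self hρ⟩ hz
  have hpK := connectedComponentIn_subset _ _ hpC
  exact ⟨p, hpC, le_antisymm (closure_ball_subset_closedBall hpU) (not_lt.mp hpK.2)⟩

variable [MeasurableSpace E] [BorelSpace E]

/- `w ↦ min (dist w p) ρ` is `1`-Lipschitz and maps `A ∩ closedBall p ρ` onto `[0, ρ)`. -/
theorem IsPreconnected.ofReal_le_hausdorffMeasure_inter_closedBall {A : Set E}
    (hA : IsPreconnected A) {p q : E} (hp : p ∈ A) (hq : q ∈ A) {ρ : ℝ} (hρ : ρ ≤ dist q p) :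
    ENNReal.ofReal ρ ≤ μH[1] (A ∩ closedBall p ρ) := by
  rcases lt_or_ge ρ 0 with hρ0 | hρ0
  · simp [ENNReal.ofReal_of_nonpos hρ0.le]
  set g : E → ℝ := fun w => min (dist w p) ρ
  have hg : LipschitzWith 1 g := (LipschitzWith.dist_left p).min_const ρ
  have hIcc : Icc 0 ρ ⊆ g '' A :=
    (hA.image g hg.continuous.continuousOn).Icc_subset ⟨p, hp, by simp [g, hρ0]⟩
      ⟨q, hq, min_eq_right hρ⟩
  have hIco : Ico 0 ρ ⊆ g '' (A ∩ closedBall p ρ) := by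
    intro s hs
    obtain ⟨w, hwA, hw⟩ := hIcc (Ico_subset_Icc_self hs)
    have hwp : dist w p < ρ := by
      by_contra! h
      simp only [g, min_eq_right h] at hw
      exact hs.2.ne hw.symm
    exact ⟨w, ⟨hwA, mem_closedBall.mpr hwp.le⟩, hw⟩
  calc ENNReal.ofReal ρ = μH[1] (Ico 0 ρ) := by
        rw [hausdorffMeasure_real, Real.volume_Ico, sub_zero]
    _ ≤ μH[1] (g '' (A ∩ closedBall p ρ)) := measure_mono hIco
    _ ≤ μH[1] (A ∩ closedBall p ρ) := by
      simpa using hg.hausdorffMeasure_image_le zero_le_one (A ∩ closedBall p ρ)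

theorem IsPreconnected.ofReal_le_hausdorffMeasure_inter_ball {A : Set E} (hA : IsPreconnected A)
    {a b x : E} (ha : a ∈ A) (hb : b ∈ A) (hx : x ∈ A) {ε : ℝ} (hε : 0 < ε)
    (hεab : ε ≤ dist a b) : ENNReal.ofReal (ε / 2) ≤ μH[1] (A ∩ ball x ε) := by
  obtain ⟨q, hq, hqx⟩ : ∃ q ∈ A, ε / 2 ≤ dist q x := by
    by_cases hax : ε / 2 ≤ dist a x
    · exact ⟨a, ha, hax⟩
    · refine ⟨b, hb, ?_⟩
      linarith [dist_triangle a x b, dist_comm x b]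
  exact (hA.ofReal_le_hausdorffMeasure_inter_closedBall hx hq hqx).trans
    (measure_mono (inter_subset_inter_right _ (closedBall_subset_ball (by linarith))))

variable {S : Set E} {x : E} {ρ : ℝ}

theorem exists_mem_connectedComponentIn_diff_ball_ofReal_le (hS : IsPreconnected S)
    (hSc : IsCompact S) (hx : x ∈ S) (hρ : 0 < ρ) {τ : ℝ} {z : E} (hz : z ∈ S \ ball x ρ)
    (hfar : ¬ connectedComponentIn (S \ ball x ρ) z ⊆ closedBall x (ρ + τ)) :
    ∃ p ∈ connectedComponentIn (S \ ball x ρ) z, dist p x = ρ ∧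
      ENNReal.ofReal τ ≤ μH[1] (connectedComponentIn (S \ ball x ρ) z ∩ closedBall p τ) := by
  obtain ⟨p, hpC, hpx⟩ := exists_mem_connectedComponentIn_diff_ball_dist_eq hS hSc hx hρ hz
  obtain ⟨q, hqC, hqx⟩ := not_subset.mp hfar
  have hqp : τ ≤ dist q p := by
    linarith [dist_triangle q p x, not_le.mp (mt mem_closedBall.mpr hqx)]
  exact ⟨p, hpC, hpx,
    isPreconnected_connectedComponentIn.ofReal_le_hausdorffMeasure_inter_closedBall hpC hqC hqp⟩

/- Only finitely many components of `S \ ball x ρ` leave `closedBall x (ρ + τ)`: each of them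
carries mass `τ` inside `closedBall x (ρ + τ)`, near the point where it touches the sphere. -/
theorem exists_finset_components_cover (hS : IsPreconnected S) (hSc : IsCompact S)
    (hfin : μH[1] S ≠ ⊤) (hx : x ∈ S) (hρ : 0 < ρ) {τ : ℝ} (hτ : 0 < τ) :
    ∃ (F : Finset (Set E)) (p : Set E → E),
      (∀ C ∈ F, IsCompact C ∧ IsPreconnected C ∧ C ⊆ S \ ball x ρ ∧ p C ∈ C ∧ dist (p C) x = ρ) ∧
      S ⊆ (⋃ C ∈ F, C) ∪ closedBall x (ρ + τ) ∧
      F.card * ENNReal.ofReal τ ≤ μH[1] (S ∩ closedBall x (ρ + τ)) := by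
  set K := S \ ball x ρ
  set 𝒞 : Set (Set E) :=
    {C | (∃ z ∈ K, connectedComponentIn K z = C) ∧ ¬ C ⊆ closedBall x (ρ + τ)}
  have hmass : ∀ C ∈ 𝒞, ∃ p ∈ C, dist p x = ρ ∧ ENNReal.ofReal τ ≤ μH[1] (C ∩ closedBall p τ) := by
    rintro _ ⟨⟨z, hz, rfl⟩, hfar⟩
    exact exists_mem_connectedComponentIn_diff_ball_ofReal_le hS hSc hx hρ hz hfar
  have : Nonempty E := ⟨x⟩
  choose! p hpC hpx hpμ using hmass
  have hcomp : ∀ C ∈ 𝒞, IsCompact C ∧ IsPreconnected C ∧ C ⊆ K := by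
    rintro _ ⟨⟨z, -, rfl⟩, -⟩
    exact ⟨(hSc.diff isOpen_ball).connectedComponentIn z, isPreconnected_connectedComponentIn,
      connectedComponentIn_subset _ _⟩
  have hdisj : 𝒞.PairwiseDisjoint fun C => C ∩ closedBall (p C) τ := by
    rintro _ ⟨⟨z, -, rfl⟩, -⟩ _ ⟨⟨z', -, rfl⟩, -⟩ hne
    refine (disjoint_left.mpr fun w hw hw' => hne ?_).mono inter_subset_left inter_subset_left
    rw [connectedComponentIn_eq hw, connectedComponentIn_eq hw']
  have hball : ∀ C ∈ 𝒞, C ∩ closedBall (p C) τ ⊆ S ∩ closedBall x (ρ + τ) := by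
    refine fun C hC w ⟨hwC, hwp⟩ => ⟨((hcomp C hC).2.2 hwC).1, mem_closedBall.mpr ?_⟩
    linarith [dist_triangle w (p C) x, mem_closedBall.mp hwp, hpx C hC]
  have h𝒞 : 𝒞.Finite := hdisj.finite_of_le_measure
    (fun C hC => (hcomp C hC).1.isClosed.measurableSet.inter measurableSet_closedBall)
    (ENNReal.ofReal_pos.mpr hτ).ne' hpμ hball (measure_mono inter_subset_left |>.trans_lt
      hfin.lt_top).ne
  refine ⟨h𝒞.toFinset, p, fun C hC => ?_, fun w hw => ?_, ?_⟩
  · rw [Finite.mem_toFinset] at hC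
    exact ⟨(hcomp C hC).1, (hcomp C hC).2.1, (hcomp C hC).2.2, hpC C hC, hpx C hC⟩
  · by_cases hwK : w ∈ K
    · by_cases hfar : connectedComponentIn K w ⊆ closedBall x (ρ + τ)
      · exact Or.inr (hfar (mem_connectedComponentIn hwK))
      · have hC : connectedComponentIn K w ∈ h𝒞.toFinset :=
          (Finite.mem_toFinset _).mpr ⟨⟨w, hwK, rfl⟩, hfar⟩
        exact Or.inl (mem_biUnion hC (mem_connectedComponentIn hwK))
    · have hwx : w ∈ ball x ρ := not_not.mp fun h => hwK ⟨hw, h⟩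
      exact Or.inr (ball_subset_closedBall.trans (closedBall_subset_closedBall (by linarith)) hwx)
  · refine (hdisj.subset (Finite.coe_toFinset h𝒞).subset).card_mul_le_measure ?_ ?_ ?_ <;>
      intro C hC <;> rw [Finite.mem_toFinset] at hC
    exacts [(hcomp C hC).1.isClosed.measurableSet.inter measurableSet_closedBall, hpμ C hC,
      hball C hC]

end MetricMeasure

section Fan

variable {E ι : Type*} [NormedAddCommGroup E] [NormedSpace ℝ E]

def fan (x : E) (F : Finset ι) (f : ι → E) : Set E :=
  ⋃ i ∈ F, segment ℝ x (f i)

theorem segment_subset_fan {x : E} {F : Finset ι} {f : ι → E} {i : ι} (hi : i ∈ F) :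
    segment ℝ x (f i) ⊆ fan x F f :=
  subset_biUnion_of_mem (u := fun i => segment ℝ x (f i)) hi

theorem isCompact_segment (x y : E) : IsCompact (segment ℝ x y) := by
  rw [← convexHull_pair]
  exact (toFinite _).isCompact_convexHull ℝ

theorem isCompact_fan (x : E) (F : Finset ι) (f : ι → E) : IsCompact (fan x F f) :=
  F.isCompact_biUnion fun i _ => isCompact_segment x (f i)

theorem self_mem_fan (x : E) {F : Finset ι} (hF : F.Nonempty) (f : ι → E) : x ∈ fan x F f :=
  segment_subset_fan hF.choose_spec (left_mem_segment ℝ x _)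

theorem isConnected_fan (x : E) {F : Finset ι} (hF : F.Nonempty) (f : ι → E) :
    IsConnected (fan x F f) :=
  (StarConvex.isPathConnected (starConvex_iUnion₂ fun _ _ =>
    (convex_segment x _).starConvex (left_mem_segment ℝ x _)) (self_mem_fan x hF f)).isConnected

theorem hausdorffMeasure_biUnion_segment_le [MeasurableSpace E] [BorelSpace E] {F : Finset ι}
    {a b : ι → E} {ρ : ℝ} (h : ∀ i ∈ F, dist (a i) (b i) ≤ ρ) :
    μH[1] (⋃ i ∈ F, segment ℝ (a i) (b i)) ≤ F.card * ENNReal.ofReal ρ := by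
  refine (measure_biUnion_finset_le F _).trans ?_
  rw [← nsmul_eq_mul]
  refine Finset.sum_le_card_nsmul _ _ _ fun i hi => ?_
  rw [hausdorffMeasure_segment, edist_dist]
  exact ENNReal.ofReal_le_ofReal (h i hi)

theorem hausdorffMeasure_fan_smul_le [MeasurableSpace E] [BorelSpace E] (x : E) {ρ : ℝ}
    (hρ : 0 ≤ ρ) {D : Finset E} (hD : (D : Set E) ⊆ sphere 0 1) :
    μH[1] (fan x D fun θ => x + ρ • θ) ≤ D.card * ENNReal.ofReal ρ := by
  refine hausdorffMeasure_biUnion_segment_le fun θ hθ => ?_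
  rw [dist_self_add_right, norm_smul, mem_sphere_zero_iff_norm.mp (hD hθ), Real.norm_of_nonneg hρ,
    mul_one]

/- With `y - x = s • v`, `‖v‖ = 1` and `θ ∈ D` close to `v`, the point `x + σ • θ` of the fan
satisfies `y - (x + σ • θ) = (s - σ) • v + σ • (v - θ)`. -/
theorem exists_mem_fan_smul_dist_le {D : Finset E} {δ : ℝ}
    (hD : sphere (0 : E) 1 ⊆ ⋃ θ ∈ D, ball θ δ) (x y : E) {ρ σ : ℝ} (hσ : 0 < σ) (hσρ : σ ≤ ρ)
    (hσy : σ ≤ dist y x) : ∃ z ∈ fan x D (fun θ => x + ρ • θ), dist y z ≤ dist y x - σ + σ * δ := by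
  set s := dist y x
  have hs : 0 < s := hσ.trans_le hσy
  set v := s⁻¹ • (y - x)
  have hv : v ∈ sphere (0 : E) 1 := by
    rw [mem_sphere_zero_iff_norm, norm_smul, ← dist_eq_norm, norm_inv, Real.norm_of_nonneg hs.le,
      inv_mul_cancel₀ hs.ne']
  obtain ⟨θ, hθ, hvθ⟩ := mem_iUnion₂.mp (hD hv)
  have hmem : x + σ • θ ∈ segment ℝ x (x + ρ • θ) := by
    rw [segment_eq_image']
    have hρ : 0 < ρ := hσ.trans_le hσρ
    refine ⟨σ / ρ, ⟨by positivity, div_le_one_of_le₀ hσρ hρ.le⟩, ?_⟩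
    simp only [add_sub_cancel_left, smul_smul, div_mul_cancel₀ _ hρ.ne']
  refine ⟨x + σ • θ, segment_subset_fan hθ hmem, ?_⟩
  have hyx : y - x = s • v := by rw [smul_smul, mul_inv_cancel₀ hs.ne', one_smul]
  have hsplit : y - (x + σ • θ) = (s - σ) • v + σ • (v - θ) := by
    rw [sub_smul, smul_sub, ← hyx]
    abel
  calc dist y (x + σ • θ) ≤ ‖(s - σ) • v‖ + ‖σ • (v - θ)‖ := by
        rw [dist_eq_norm, hsplit]
        exact norm_add_le _ _
    _ ≤ s - σ + σ * δ := by
        rw [norm_smul (s - σ) v, norm_smul σ, mem_sphere_zero_iff_norm.mp hv,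
          Real.norm_of_nonneg (by linarith), Real.norm_of_nonneg hσ.le, mul_one, ← dist_eq_norm]
        gcongr
        exact (mem_ball.mp hvθ).le

theorem infDist_fan_smul_le {D : Finset E} (hDne : D.Nonempty)
    (hD : sphere (0 : E) 1 ⊆ ⋃ θ ∈ D, ball θ (1 / 12)) {x y : E} {r t : ℝ} (ht : 0 < t)
    (htr : 4 * t ≤ r) (hy : dist y x ≤ r + 3 * t) :
    infDist y (fan x D fun θ => x + (4 * t) • θ) ≤ r := by
  rcases le_or_gt (dist y x) r with hyx | hyx
  · exact (infDist_le_dist_of_mem (self_mem_fan x hDne _)).trans hyx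
  obtain ⟨z, hz, hyz⟩ := exists_mem_fan_smul_dist_le hD x y (ρ := 4 * t) (σ := 4 * t)
    (by positivity) le_rfl (by linarith)
  exact (infDist_le_dist_of_mem hz).trans (by linarith)

theorem exists_finset_sphere_net (E : Type*) [NormedAddCommGroup E] [NormedSpace ℝ E]
    [ProperSpace E] [Nontrivial E] {δ : ℝ} (hδ : 0 < δ) :
    ∃ D : Finset E, D.Nonempty ∧ (D : Set E) ⊆ sphere 0 1 ∧
      sphere (0 : E) 1 ⊆ ⋃ θ ∈ D, ball θ δ := by
  obtain ⟨D, hDs, hcover⟩ := (isCompact_sphere (0 : E) 1).elim_nhds_subcover (fun θ => ball θ δ)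
    fun θ _ => ball_mem_nhds θ hδ
  obtain ⟨v, hv⟩ := (NormedSpace.sphere_nonempty (x := (0 : E))).mpr zero_le_one
  obtain ⟨θ, hθ, -⟩ := mem_iUnion₂.mp (hcover hv)
  exact ⟨D, ⟨θ, hθ⟩, hDs, hcover⟩

end Fan

/- On `(T / 3, T]` the bound `u ≤ L` suffices; below `T / 3` the recursion halves the
constant `3 * L / T + 2 * C` and adds back at most `C`. -/
theorem le_mul_of_le_add_div_six {u : ℝ → ℝ} {T L C : ℝ} (hT : 0 < T) (hL0 : 0 ≤ L)
    (hC : 0 ≤ C) (hL : ∀ t, 0 < t → u t ≤ L)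
    (hstep : ∀ t, 0 < t → t ≤ T → u t ≤ C * t + u (3 * t) / 6) {t : ℝ} (ht : 0 < t)
    (htT : t ≤ T) : u t ≤ (3 * L / T + 2 * C) * t := by
  have hK : 0 ≤ 3 * L / T := by positivity
  suffices h : ∀ n : ℕ, ∀ t, 0 < t → t ≤ T → T < 3 ^ n * t → u t ≤ (3 * L / T + 2 * C) * t by
    obtain ⟨n, hn⟩ := pow_unbounded_of_one_lt (T / t) (by norm_num : (1 : ℝ) < 3)
    exact h n t ht htT ((div_lt_iff₀ ht).mp hn)
  intro n
  induction n with
  | zero => intro t _ htT hTt; linarith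
  | succ n ih =>
    intro t ht htT hTt
    rcases le_or_gt (3 * t) T with h3t | h3t
    · have hu3 := ih (3 * t) (by positivity) h3t (by rw [pow_succ] at hTt; linarith)
      have := hstep t ht htT
      nlinarith
    · have hLt : L ≤ 3 * L / T * t := by
        rw [div_mul_eq_mul_div, le_div_iff₀ hT]
        nlinarith
      nlinarith [hL t ht]

section Energy

variable {d : ℕ} {M S S' : Set (Euc d)} {r : ℝ}

theorem infDist_le_of_FM_le (hM : IsCompact M) (h : FM M S ≤ r) {y : Euc d} (hy : y ∈ M) :
    infDist y S ≤ r :=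
  (le_csSup ((hM.image (continuous_infDist_pt S)).bddAbove) (mem_image_of_mem _ hy)).trans h

theorem FM_le_of_forall_infDist_le (hr : 0 ≤ r) (h : ∀ y ∈ M, infDist y S ≤ r) : FM M S ≤ r :=
  Real.sSup_le (forall_mem_image.mpr h) hr

/- A point of `M` served by `S` near `x` lies within `r + ρ` of `x`. -/
theorem FM_le_of_subset_union_closedBall (hM : IsCompact M) (hr : 0 ≤ r) (hSc : IsCompact S)
    (hSne : S.Nonempty) (hSM : FM M S ≤ r) {x : Euc d} {ρ : ℝ} (hsub : S ⊆ S' ∪ closedBall x ρ)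
    (hserve : ∀ y, dist y x ≤ r + ρ → infDist y S' ≤ r) : FM M S' ≤ r := by
  refine FM_le_of_forall_infDist_le hr fun y hy => ?_
  obtain ⟨z, hzS, hz⟩ := hSc.exists_infDist_eq_dist hSne y
  have hyz : dist y z ≤ r := hz ▸ infDist_le_of_FM_le hM hSM hy
  rcases hsub hzS with hzS' | hzx
  · exact (infDist_le_dist_of_mem hzS').trans hyz
  · exact hserve y (by linarith [dist_triangle y z x, mem_closedBall.mp hzx])

theorem exists_FM_le_hausdorffMeasure_lt_top (hM : IsCompact M) (hMne : M.Nonempty)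
    (hr : 0 < r) : ∃ T : Set (Euc d), IsCompact T ∧ IsConnected T ∧ FM M T ≤ r ∧ μH[1] T < ⊤ := by
  obtain ⟨y₀, hy₀⟩ := hMne
  obtain ⟨F, hFM, hcover⟩ := hM.elim_nhds_subcover (fun y => ball y r) fun y _ => ball_mem_nhds y hr
  obtain ⟨R, hR⟩ := hM.isBounded.subset_closedBall y₀
  have hF : F.Nonempty := by
    obtain ⟨z, hz, -⟩ := mem_iUnion₂.mp (hcover hy₀)
    exact ⟨z, hz⟩
  refine ⟨fan y₀ F id, isCompact_fan _ _ _, isConnected_fan _ hF _,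
    FM_le_of_forall_infDist_le hr.le fun y hy => ?_, ?_⟩
  · obtain ⟨z, hz, hyz⟩ := mem_iUnion₂.mp (hcover hy)
    exact (infDist_le_dist_of_mem (segment_subset_fan hz (right_mem_segment ℝ y₀ z))).trans
      (mem_ball.mp hyz).le
  · refine (hausdorffMeasure_biUnion_segment_le (ρ := R) fun z hz => ?_).trans_lt (by finiteness)
    rw [dist_comm]
    exact hR (hFM z hz)

end Energy

namespace IsRMinimizer

variable {d : ℕ} {M S : Set (Euc d)} {r : ℝ}

theorem hausdorffMeasure_lt_top (hS : IsRMinimizer M r S) (hM : IsCompact M) (hr : 0 < r) :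
    μH[1] S < ⊤ := by
  rcases M.eq_empty_or_nonempty with rfl | hMne
  · obtain ⟨a, -⟩ := hS.2.1.nonempty
    have := Measure.nullSingletonClass_hausdorff (Euc d) one_pos
    refine (hS.2.2.2 {a} isCompact_singleton isConnected_singleton ?_).trans_lt (by simp)
    exact FM_le_of_forall_infDist_le hr.le fun y hy => hy.elim
  · obtain ⟨T, hTc, hTconn, hTM, hT⟩ := exists_FM_le_hausdorffMeasure_lt_top hM hMne hr
    exact (hS.2.2.2 T hTc hTconn hTM).trans_lt hT

/- Replace `S ∩ ball x (2 * t)` by spokes of length `4 * t` from `x`, keep the components of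
`S \ ball x (2 * t)` leaving `closedBall x (3 * t)` and join each of them to the spokes by a
segment of length `t / 6`; the spokes serve every point of `M` that the discarded part of `S`
served. -/
theorem exists_competitor (hS : IsRMinimizer M r S) (hM : IsCompact M) (hfin : μH[1] S < ⊤)
    {D : Finset (Euc d)} (hDne : D.Nonempty) (hDs : (D : Set (Euc d)) ⊆ sphere 0 1)
    (hDnet : sphere (0 : Euc d) 1 ⊆ ⋃ θ ∈ D, ball θ (1 / 12)) {x : Euc d} (hx : x ∈ S) {t : ℝ}
    (ht : 0 < t) (htr : 4 * t ≤ r) :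
    ∃ S' : Set (Euc d), IsCompact S' ∧ IsConnected S' ∧ FM M S' ≤ r ∧
      μH[1] S' ≤ D.card * ENNReal.ofReal (4 * t) +
        (μH[1] (S ∩ closedBall x (3 * t)) / 6 + μH[1] (S \ ball x (2 * t))) := by
  obtain ⟨hSc, hSconn, hSM, -⟩ := hS
  obtain ⟨F, p, hF, hcover, hcard⟩ := exists_finset_components_cover hSconn.isPreconnected hSc
    hfin.ne hx (ρ := 2 * t) (by positivity) ht
  rw [show 2 * t + t = 3 * t by ring] at hcover hcard
  set X := fan x D fun θ => x + (4 * t) • θ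
  have hxX : x ∈ X := self_mem_fan x hDne _
  have hnear : ∀ C ∈ F, ∃ q ∈ X, dist (p C) q ≤ t / 6 := by
    intro C hC
    obtain ⟨z, hzX, hz⟩ := exists_mem_fan_smul_dist_le hDnet x (p C) (ρ := 4 * t)
      (σ := 2 * t) (by positivity) (by linarith) (hF C hC).2.2.2.2.ge
    exact ⟨z, hzX, by linarith [(hF C hC).2.2.2.2]⟩
  choose! q hqX hpq using hnear
  refine ⟨X ∪ ⋃ C ∈ F, (segment ℝ (p C) (q C) ∪ C), ?_, ?_, ?_, ?_⟩
  · exact (isCompact_fan _ _ _).union <| F.isCompact_biUnion fun C hC =>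
      (isCompact_segment _ _).union (hF C hC).1
  · refine ⟨⟨x, Or.inl hxX⟩, isPreconnected_union_biUnion hxX
      (isConnected_fan x hDne _).isPreconnected (fun C hC => ?_) fun C hC => ?_⟩
    · exact (convex_segment _ _).isPreconnected.union (p C) (left_mem_segment ℝ _ _)
        (hF C hC).2.2.2.1 (hF C hC).2.1
    · exact ⟨q C, hqX C hC, Or.inl (right_mem_segment ℝ _ _)⟩
  · refine FM_le_of_subset_union_closedBall hM (by linarith) hSc hSconn.nonempty hSM
      (hcover.trans (union_subset_union_left _ ?_)) fun y hy =>
        (infDist_le_infDist_of_subset subset_union_left ⟨x, hxX⟩).trans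
          (infDist_fan_smul_le hDne hDnet ht htr hy)
    exact iUnion₂_subset fun C hC => subset_union_right.trans <|
      (subset_biUnion_of_mem (u := fun C => segment ℝ (p C) (q C) ∪ C) hC).trans subset_union_right
  · have hsegs : μH[1] (⋃ C ∈ F, segment ℝ (p C) (q C)) ≤ μH[1] (S ∩ closedBall x (3 * t)) / 6 :=
      calc μH[1] (⋃ C ∈ F, segment ℝ (p C) (q C)) ≤ F.card * ENNReal.ofReal (t / 6) :=
            hausdorffMeasure_biUnion_segment_le hpq
        _ = F.card * ENNReal.ofReal t / 6 := by
            rw [ENNReal.ofReal_div_of_pos (by norm_num), ENNReal.ofReal_ofNat, mul_div_assoc]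
        _ ≤ μH[1] (S ∩ closedBall x (3 * t)) / 6 := by gcongr
    refine (measure_union_le _ _).trans (add_le_add
      (hausdorffMeasure_fan_smul_le x (by positivity) hDs) ((measure_mono ?_).trans
        ((measure_union_le _ _).trans (add_le_add hsegs
          (measure_mono (iUnion₂_subset fun C hC => (hF C hC).2.2.1))))))
    exact iUnion₂_subset fun C hC => union_subset_union
      (subset_biUnion_of_mem (u := fun C => segment ℝ (p C) (q C)) hC)
      (subset_biUnion_of_mem (u := fun C => C) hC)

theorem hausdorffMeasure_inter_ball_le (hS : IsRMinimizer M r S) (hM : IsCompact M)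
    (hfin : μH[1] S < ⊤) {D : Finset (Euc d)} (hDne : D.Nonempty)
    (hDs : (D : Set (Euc d)) ⊆ sphere 0 1)
    (hDnet : sphere (0 : Euc d) 1 ⊆ ⋃ θ ∈ D, ball θ (1 / 12)) {x : Euc d} (hx : x ∈ S) {t : ℝ}
    (ht : 0 < t) (htr : 4 * t ≤ r) :
    μH[1] (S ∩ ball x (2 * t)) ≤
      D.card * ENNReal.ofReal (4 * t) + μH[1] (S ∩ closedBall x (3 * t)) / 6 := by
  obtain ⟨S', hS'c, hS'conn, hS'M, hS'μ⟩ := hS.exists_competitor hM hfin hDne hDs hDnet hx ht htr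
  refine measure_inter_le_of_le_measure_diff_add measurableSet_ball
    (measure_mono sdiff_subset |>.trans_lt hfin).ne
    ((hS.2.2.2 S' hS'c hS'conn hS'M).trans (hS'μ.trans_eq (by ring)))

theorem exists_hausdorffMeasure_inter_closedBall_le [Nontrivial (Euc d)]
    (hS : IsRMinimizer M r S) (hM : IsCompact M) (hr : 0 < r) :
    ∃ C : ℝ, 0 < C ∧ ∀ x ∈ S, ∀ t : ℝ, 0 < t → t ≤ r / 4 →
      μH[1] (S ∩ closedBall x t) ≤ ENNReal.ofReal (C * t) := by
  obtain ⟨D, hDne, hDs, hDnet⟩ := exists_finset_sphere_net (Euc d) (by norm_num : (0 : ℝ) < 1 / 12)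
  have hfin := hS.hausdorffMeasure_lt_top hM hr
  set L := (μH[1] S).toReal
  refine ⟨3 * L / (r / 4) + 2 * (4 * D.card), by positivity, fun x hx t ht htr => ?_⟩
  set u : ℝ → ℝ := fun t => (μH[1] (S ∩ closedBall x t)).toReal
  have hstep : ∀ t, 0 < t → t ≤ r / 4 → u t ≤ 4 * D.card * t + u (3 * t) / 6 := by
    intro t ht htr
    have hsub : S ∩ closedBall x t ⊆ S ∩ ball x (2 * t) :=
      inter_subset_inter_right _ (closedBall_subset_ball (by linarith))
    calc u t ≤ (D.card * ENNReal.ofReal (4 * t) + μH[1] (S ∩ closedBall x (3 * t)) / 6).toReal :=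
          ENNReal.toReal_mono (by finiteness) ((measure_mono hsub).trans
            (hS.hausdorffMeasure_inter_ball_le hM hfin hDne hDs hDnet hx ht (by linarith)))
      _ = 4 * D.card * t + u (3 * t) / 6 := by
          rw [ENNReal.toReal_add (by finiteness) (by finiteness), ENNReal.toReal_mul,
            ENNReal.toReal_div, ENNReal.toReal_ofReal (by positivity), ENNReal.toReal_natCast,
            ENNReal.toReal_ofNat]
          ring
  rw [← ENNReal.ofReal_toReal (measure_mono inter_subset_left |>.trans_lt hfin).ne]
  exact ENNReal.ofReal_le_ofReal <| le_mul_of_le_add_div_six (by positivity) ENNReal.toReal_nonneg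
    (by positivity) (fun t _ => ENNReal.toReal_mono hfin.ne (measure_mono inter_subset_left))
    hstep ht htr

end IsRMinimizer

/-- Ahlfors regularity of r-minimizers. -/
theorem rMinimizer_ahlfors_regular {d : ℕ} (M : Set (Euc d)) (hM : IsCompact M)
    (r : ℝ) (hr : 0 < r) (S : Set (Euc d)) (hS : IsRMinimizer M r S)
    (hlen : 0 < μH[1] S) :
    ∃ C₁ C₂ ε₀ : ℝ, 0 < C₁ ∧ 0 < C₂ ∧ 0 < ε₀ ∧
      ∀ x ∈ S, ∀ ε : ℝ, 0 < ε → ε < ε₀ →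
        ENNReal.ofReal (C₁ * ε) ≤ μH[1] (S ∩ Metric.ball x ε) ∧
        μH[1] (S ∩ Metric.ball x ε) ≤ ENNReal.ofReal (C₂ * ε) := by
  obtain ⟨a, ha, b, hb, hab⟩ : ∃ a ∈ S, ∃ b ∈ S, a ≠ b := by
    by_contra! h
    have := Measure.nullSingletonClass_hausdorff (Euc d) one_pos
    exact hlen.ne' (Set.Subsingleton.measure_zero h _)
  have : Nontrivial (Euc d) := ⟨⟨a, b, hab⟩⟩
  obtain ⟨C, hC, hupper⟩ := hS.exists_hausdorffMeasure_inter_closedBall_le hM hr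
  refine ⟨1 / 2, C, min (r / 4) (dist a b), by norm_num, hC,
    lt_min (by positivity) (dist_pos.mpr hab), fun x hx ε hε hεlt => ⟨?_, ?_⟩⟩
  · rw [one_div_mul_eq_div]
    exact hS.2.1.isPreconnected.ofReal_le_hausdorffMeasure_inter_ball ha hb hx hε
      (hεlt.le.trans (min_le_right _ _))
  · exact (measure_mono (inter_subset_inter_right _ ball_subset_closedBall)).trans
      (hupper x hx ε hε (hεlt.le.trans (min_le_left _ _)))

end
end

section
/- (i) Let Σ be an r-minimizer for some compact M ⊂ ℝ^d. Then Σ is an r-minimizer for the compact set cl(B_r(Σ)), the closed r-neighborhood of Σ. (ii) Let Σ be an r-minimizer for cl(B_r(Σ)). Then for every 0 < r' < r, Σ is an r'-minimizer for cl(B_{r'}(Σ)). -/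
open MeasureTheory Metric Set Filter EuclideanGeometry Asymptotics

noncomputable section

/-- Membership in the cthickening in terms of `infDist`. -/
lemma mem_cth_iff {d : ℕ} {S : Set (Euc d)} (hS : S.Nonempty) {δ : ℝ} (hδ : 0 ≤ δ)
    {x : Euc d} : x ∈ Metric.cthickening δ S ↔ Metric.infDist x S ≤ δ := by
  rw [Metric.mem_cthickening_iff, Metric.infDist,
    ← ENNReal.le_ofReal_iff_toReal_le (Metric.infEdist_ne_top hS) hδ]

lemma FM_le {d : ℕ} {M S : Set (Euc d)} {r : ℝ} (hr : 0 ≤ r)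
    (h : ∀ y ∈ M, Metric.infDist y S ≤ r) : FM M S ≤ r := by
  refine Real.sSup_le ?_ hr
  rintro _ ⟨y, hy, rfl⟩
  exact h y hy

lemma le_FM {d : ℕ} {M S : Set (Euc d)} (hM : IsCompact M) {y : Euc d} (hy : y ∈ M) :
    Metric.infDist y S ≤ FM M S :=
  le_csSup ((hM.image (Metric.continuous_infDist_pt S)).bddAbove) ⟨y, hy, rfl⟩

lemma isCompact_clth {d : ℕ} {S : Set (Euc d)} (hS : IsCompact S) (δ : ℝ) :
    IsCompact (closure (Metric.thickening δ S)) :=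
  (hS.cthickening).of_isClosed_subset isClosed_closure
    (Metric.closure_thickening_subset_cthickening δ S)

/-- Key geometric step: if every point of the closed `r'`-neighborhood of `S` is within
`r'` of `S'`, then every point of the closed `r`-neighborhood of `S` is within `r` of `S'`. -/
lemma key_step {d : ℕ} {S S' : Set (Euc d)} (hS : IsCompact S) (hSne : S.Nonempty)
    {r r' : ℝ} (hr' : 0 < r') (hrr : r' < r)
    (h : ∀ z ∈ closure (Metric.thickening r' S), Metric.infDist z S' ≤ r') :
    ∀ y ∈ closure (Metric.thickening r S), Metric.infDist y S' ≤ r := by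
  have hr : 0 < r := hr'.trans hrr
  intro y hy
  have hy' : Metric.infDist y S ≤ r :=
    (mem_cth_iff hSne hr.le).1 (Metric.closure_thickening_subset_cthickening r S hy)
  obtain ⟨x, hxS, hxd⟩ := hS.exists_infDist_eq_dist hSne y
  rw [closure_thickening hr']  at h
  by_cases hcase : dist y x ≤ r'
  · have : y ∈ Metric.cthickening r' S :=
      (mem_cth_iff hSne hr'.le).2 (le_trans (Metric.infDist_le_dist_of_mem hxS) hcase)
    exact (h y this).trans hrr.le
  · push_neg at hcase
    set D := dist y x with hDdef
    have hDpos : 0 < D := hr'.trans hcase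
    set t : ℝ := r' / D with htdef
    have ht0 : 0 ≤ t := div_nonneg hr'.le hDpos.le
    have ht1 : t ≤ 1 := (div_le_one hDpos).2 hcase.le
    set z : Euc d := x + t • (y - x) with hzdef
    have hnorm : ‖y - x‖ = D := (dist_eq_norm y x).symm
    have hzx : dist z x = r' := by
      rw [dist_eq_norm]
      have : z - x = t • (y - x) := by rw [hzdef]; abel
      rw [this, norm_smul, Real.norm_eq_abs, abs_of_nonneg ht0, hnorm, htdef,
        div_mul_cancel₀ _ hDpos.ne']
    have hyz : dist y z = D - r' := by
      rw [dist_eq_norm]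
      have : y - z = (1 - t) • (y - x) := by
        rw [hzdef, sub_smul, one_smul]; abel
      rw [this, norm_smul, Real.norm_eq_abs, abs_of_nonneg (by linarith), hnorm, htdef]
      field_simp
    have hzmem : z ∈ Metric.cthickening r' S :=
      (mem_cth_iff hSne hr'.le).2
        (le_trans (Metric.infDist_le_dist_of_mem hxS) hzx.le)
    have h1 : Metric.infDist y S' ≤ Metric.infDist z S' + dist y z :=
      Metric.infDist_le_infDist_add_dist
    have h2 : Metric.infDist z S' ≤ r' := h z hzmem
    have hDr : D ≤ r := by rw [← hxd]; exact hy'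
    linarith [h1, h2, hDr, hyz]

/-- (i) An r-minimizer for M is an r-minimizer for the closed r-neighborhood of itself;
(ii) an r-minimizer for its own closed r-neighborhood is an r'-minimizer for its
closed r'-neighborhood, for every 0 < r' < r. -/
theorem rMinimizer_inverse {d : ℕ} (r : ℝ) (hr : 0 < r) :
    (∀ M S : Set (Euc d), IsCompact M → IsRMinimizer M r S →
      IsRMinimizer (closure (Metric.thickening r S)) r S) ∧
    (∀ S : Set (Euc d), IsRMinimizer (closure (Metric.thickening r S)) r S →
      ∀ r' : ℝ, 0 < r' → r' < r → IsRMinimizer (closure (Metric.thickening r' S)) r' S) := by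
  constructor
  · rintro M S hM ⟨hScomp, hSconn, hSFM, hSmin⟩
    have hSne : S.Nonempty := hSconn.nonempty
    refine ⟨hScomp, hSconn, ?_, ?_⟩
    · refine FM_le hr.le fun y hy => ?_
      exact (mem_cth_iff hSne hr.le).1 (Metric.closure_thickening_subset_cthickening r S hy)
    · intro S' hS'comp hS'conn hS'FM
      refine hSmin S' hS'comp hS'conn (FM_le hr.le fun y hy => ?_)
      have hyth : y ∈ closure (Metric.thickening r S) := by
        rw [closure_thickening hr]
        exact (mem_cth_iff hSne hr.le).2 ((le_FM hM hy).trans hSFM)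
      exact (le_FM (isCompact_clth hScomp r) hyth).trans hS'FM
  · rintro S ⟨hScomp, hSconn, hSFM, hSmin⟩ r' hr'pos hr'lt
    have hSne : S.Nonempty := hSconn.nonempty
    refine ⟨hScomp, hSconn, ?_, ?_⟩
    · refine FM_le hr'pos.le fun y hy => ?_
      exact (mem_cth_iff hSne hr'pos.le).1
        (Metric.closure_thickening_subset_cthickening r' S hy)
    · intro S' hS'comp hS'conn hS'FM
      refine hSmin S' hS'comp hS'conn (FM_le hr.le ?_)
      refine key_step hScomp hSne hr'pos hr'lt (fun z hz => ?_)
      exact (le_FM (isCompact_clth hScomp r') hz).trans hS'FM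
end
end

section
/- Let M ⊂ ℝ^d be compact, l > 0, and λ > 1. Then a compact connected set Σ ⊂ ℝ^d minimizes the penalized functional F_M(Σ') + λ·max(H^1(Σ') − l, 0) over all compact connected sets Σ' if and only if Σ is a maximal distance minimizer for (M, l); i.e. the penalized problem is equivalent to the maximal distance minimizer problem. -/
open MeasureTheory Metric Set Filter EuclideanGeometry Asymptotics

noncomputable section

/-- The `λ`-penalized functional `F_M(S) + λ·(H^1(S) − l)⁺` (valued in ℝ≥0∞,
with truncated subtraction playing the role of the positive part). -/
noncomputable def penalized {d : ℕ} (M : Set (Euc d)) (l lam : ℝ) (S : Set (Euc d)) :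
    ENNReal :=
  ENNReal.ofReal (FM M S) + ENNReal.ofReal lam * (μH[1] S - ENNReal.ofReal l)

/-!
Shrinking a compact connected set `S` of length `L > l` by the homothety of ratio `l / L` about
one of its points yields a competitor of length at most `l` whose points are within `L - l` of
`S`, since a connected set of length `L` has diameter at most `L`. Hence the length constraint
can be met at the cost of at most `L - l` in `F_M`, which is strictly cheaper than the penalty
`λ (L - l)` when `λ > 1`, and no more expensive when `λ ≥ 1`.
-/

open AffineMap
open scoped ENNReal

theorem IsPreconnected.edist_le_hausdorffMeasure_one {X : Type*} [MetricSpace X]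
    [MeasurableSpace X] [BorelSpace X] {S : Set X} (hS : IsPreconnected S) {x y : X}
    (hx : x ∈ S) (hy : y ∈ S) : edist x y ≤ μH[1] S := by
  have hlip : LipschitzWith 1 (dist · x) := LipschitzWith.dist_left x
  have hIcc : Icc 0 (dist y x) ⊆ (dist · x) '' S :=
    (hS.image _ hlip.continuous.continuousOn).Icc_subset ⟨x, hx, dist_self x⟩ ⟨y, hy, rfl⟩
  calc edist x y = μH[1] (Icc 0 (dist y x)) := by
        rw [hausdorffMeasure_real, Real.volume_Icc, sub_zero, dist_comm, edist_dist]
    _ ≤ μH[1] ((dist · x) '' S) := measure_mono hIcc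
    _ ≤ μH[1] S := by simpa using hlip.hausdorffMeasure_image_le zero_le_one S

section Homothety

variable {E : Type*} [NormedAddCommGroup E] [NormedSpace ℝ E]

theorem lipschitzWith_homothety (p : E) (c : ℝ) : LipschitzWith ‖c‖₊ (homothety p c) :=
  LipschitzWith.of_dist_le_mul fun a b => by
    simp [homothety_apply, dist_eq_norm, ← smul_sub, norm_smul]

variable [MeasurableSpace E] [BorelSpace E]

theorem hausdorffMeasure_one_homothety_image_le (p : E) (c : ℝ) (S : Set E) :
    μH[1] (homothety p c '' S) ≤ ‖c‖ₑ * μH[1] S := by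
  simpa [enorm_eq_nnnorm] using
    (lipschitzWith_homothety p c).hausdorffMeasure_image_le zero_le_one S

theorem IsPreconnected.edist_homothety_le {S : Set E} (hS : IsPreconnected S) {p z : E}
    (hp : p ∈ S) (hz : z ∈ S) (c : ℝ) : edist z (homothety p c z) ≤ ‖1 - c‖ₑ * μH[1] S := by
  rw [edist_dist, dist_self_homothety, ENNReal.ofReal_mul (norm_nonneg _), ofReal_norm,
    ← edist_dist]
  exact mul_le_mul_right (hS.edist_le_hausdorffMeasure_one hp hz) _

theorem IsCompact.exists_hausdorffMeasure_le_forall_edist_le {S : Set E} (hSc : IsCompact S)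
    (hS : IsConnected S) (m : ℝ≥0∞) :
    ∃ T, IsCompact T ∧ IsConnected T ∧ μH[1] T ≤ m ∧
      ∀ z ∈ S, ∃ w ∈ T, edist z w ≤ μH[1] S - m := by
  obtain ⟨p, hp⟩ := hS.nonempty
  suffices ∃ c : ℝ, ‖c‖ₑ * μH[1] S ≤ m ∧ ‖1 - c‖ₑ * μH[1] S ≤ μH[1] S - m by
    obtain ⟨c, hcm, hcd⟩ := this
    have hcont := homothety_continuous p c
    exact ⟨homothety p c '' S, hSc.image hcont, hS.image _ hcont.continuousOn,
      (hausdorffMeasure_one_homothety_image_le p c S).trans hcm, fun z hz =>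
        ⟨_, mem_image_of_mem _ hz, (hS.isPreconnected.edist_homothety_le hp hz c).trans hcd⟩⟩
  rcases le_or_gt (μH[1] S) m with hle | hlt
  · exact ⟨1, by simpa using hle, by simp⟩
  rcases eq_or_ne (μH[1] S) ⊤ with htop | hfin
  · exact ⟨0, by simp, by simp [htop, ENNReal.top_sub hlt.ne_top]⟩
  set L := (μH[1] S).toReal
  have hL : 0 < L := ENNReal.toReal_pos (pos_of_gt hlt).ne' hfin
  have hc : 0 ≤ m.toReal / L := div_nonneg ENNReal.toReal_nonneg hL.le
  have h1c : 0 ≤ 1 - m.toReal / L := by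
    rw [sub_nonneg, div_le_one hL]
    exact ENNReal.toReal_mono hfin hlt.le
  refine ⟨m.toReal / L, ?_, ?_⟩ <;> rw [← ENNReal.ofReal_toReal hfin]
  · rw [Real.enorm_eq_ofReal hc, ← ENNReal.ofReal_mul hc, div_mul_cancel₀ _ hL.ne',
      ENNReal.ofReal_toReal hlt.ne_top]
  · rw [Real.enorm_eq_ofReal h1c, ← ENNReal.ofReal_mul h1c, ← ENNReal.ofReal_toReal hlt.ne_top,
      ← ENNReal.ofReal_sub _ ENNReal.toReal_nonneg, sub_mul, one_mul, div_mul_cancel₀ _ hL.ne',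
      ENNReal.toReal_ofReal ENNReal.toReal_nonneg]

end Homothety

theorem Metric.infDist_le_infDist_add_of_forall_exists_dist_le {X : Type*} [MetricSpace X]
    {S T : Set X} (hS : S.Nonempty) {c : ℝ} (h : ∀ z ∈ S, ∃ w ∈ T, dist z w ≤ c) (y : X) :
    infDist y T ≤ infDist y S + c := by
  rw [← sub_le_iff_le_add, le_infDist hS]
  intro z hz
  obtain ⟨w, hw, hzw⟩ := h z hz
  linarith [infDist_le_dist_of_mem (x := y) hw, dist_triangle y z w]

section Energy

variable {d : ℕ}

theorem FM_nonneg (M S : Set (Euc d)) : 0 ≤ FM M S :=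
  Real.sSup_nonneg (by rintro _ ⟨y, -, rfl⟩; exact infDist_nonneg)

theorem ofReal_FM_le_add {M S T : Set (Euc d)} (hM : IsCompact M) (hS : S.Nonempty) {c : ℝ≥0∞}
    (h : ∀ z ∈ S, ∃ w ∈ T, edist z w ≤ c) :
    ENNReal.ofReal (FM M T) ≤ ENNReal.ofReal (FM M S) + c := by
  rcases eq_or_ne c ⊤ with rfl | hc
  · simp
  have hdist : ∀ z ∈ S, ∃ w ∈ T, dist z w ≤ c.toReal := fun z hz => by
    obtain ⟨w, hw, hzw⟩ := h z hz
    exact ⟨w, hw, by rwa [dist_edist, ENNReal.toReal_le_toReal (edist_ne_top z w) hc]⟩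
  have hbdd := (hM.image (continuous_infDist_pt S)).bddAbove
  have hFM : FM M T ≤ FM M S + c.toReal := by
    refine Real.sSup_le ?_ (add_nonneg (FM_nonneg M S) ENNReal.toReal_nonneg)
    rintro _ ⟨y, hy, rfl⟩
    exact (infDist_le_infDist_add_of_forall_exists_dist_le hS hdist y).trans
      (add_le_add_left (le_csSup hbdd ⟨y, hy, rfl⟩) _)
  calc ENNReal.ofReal (FM M T) ≤ ENNReal.ofReal (FM M S + c.toReal) :=
        ENNReal.ofReal_le_ofReal hFM
    _ ≤ ENNReal.ofReal (FM M S) + c :=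
        ENNReal.ofReal_add_le.trans_eq (by rw [ENNReal.ofReal_toReal hc])

theorem penalized_of_le {M S : Set (Euc d)} {l : ℝ} (lam : ℝ) (hS : μH[1] S ≤ ENNReal.ofReal l) :
    penalized M l lam S = ENNReal.ofReal (FM M S) := by
  simp [penalized, tsub_eq_zero_of_le hS]

theorem exists_ofReal_FM_add_le_penalized {M S : Set (Euc d)} (hM : IsCompact M) {l lam : ℝ}
    (hlam : 1 ≤ lam) (hSc : IsCompact S) (hS : IsConnected S) :
    ∃ T, IsCompact T ∧ IsConnected T ∧ μH[1] T ≤ ENNReal.ofReal l ∧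
      ENNReal.ofReal (FM M T) + ENNReal.ofReal (lam - 1) * (μH[1] S - ENNReal.ofReal l) ≤
        penalized M l lam S := by
  obtain ⟨T, hTc, hT, hTl, hST⟩ := hSc.exists_hausdorffMeasure_le_forall_edist_le hS
    (ENNReal.ofReal l)
  refine ⟨T, hTc, hT, hTl, ?_⟩
  have hlam_eq : ENNReal.ofReal lam = 1 + ENNReal.ofReal (lam - 1) := by
    rw [← ENNReal.ofReal_one, ← ENNReal.ofReal_add zero_le_one (by linarith), add_sub_cancel]
  calc _ ≤ ENNReal.ofReal (FM M S) + (μH[1] S - ENNReal.ofReal l) +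
        ENNReal.ofReal (lam - 1) * (μH[1] S - ENNReal.ofReal l) := by
        gcongr
        exact ofReal_FM_le_add hM hS.nonempty hST
    _ = penalized M l lam S := by rw [penalized, hlam_eq, add_mul, one_mul, add_assoc]

end Energy

theorem penalized_equiv_mdm_general {d : ℕ} (M : Set (Euc d)) (hM : IsCompact M)
    (l lam : ℝ) (hlam : 1 < lam) (S : Set (Euc d))
    (hSc : IsCompact S) (hSconn : IsConnected S) :
    (∀ S' : Set (Euc d), IsCompact S' → IsConnected S' →
      penalized M l lam S ≤ penalized M l lam S') ↔ IsMDM M l S := by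
  constructor
  · intro hmin
    obtain ⟨T, hTc, hT, hTl, hTS⟩ := exists_ofReal_FM_add_le_penalized hM hlam.le hSc hSconn
    have hexcess : ENNReal.ofReal (lam - 1) * (μH[1] S - ENNReal.ofReal l) = 0 := by
      have h := hTS.trans (hmin T hTc hT)
      rw [penalized_of_le lam hTl] at h
      exact nonpos_iff_eq_zero.mp <|
        (ENNReal.add_le_add_iff_left ENNReal.ofReal_ne_top).mp (h.trans_eq (add_zero _).symm)
    have hSl : μH[1] S ≤ ENNReal.ofReal l := by
      rw [mul_eq_zero, ENNReal.ofReal_eq_zero, tsub_eq_zero_iff_le] at hexcess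
      exact hexcess.resolve_left (by linarith)
    refine ⟨hSc, hSconn, hSl, fun S' hS'c hS' hS'l => ?_⟩
    have h := hmin S' hS'c hS'
    rwa [penalized_of_le lam hSl, penalized_of_le lam hS'l,
      ENNReal.ofReal_le_ofReal_iff (FM_nonneg M S')] at h
  · rintro ⟨-, -, hSl, hSmin⟩ S' hS'c hS'
    obtain ⟨T, hTc, hT, hTl, hTS'⟩ := exists_ofReal_FM_add_le_penalized hM hlam.le hS'c hS'
    rw [penalized_of_le lam hSl]
    exact (ENNReal.ofReal_le_ofReal (hSmin T hTc hT hTl)).trans (le_self_add.trans hTS')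

/-- For `λ > 1` the penalized problem is equivalent to the maximal distance
minimizer problem. -/
theorem penalized_equiv_mdm {d : ℕ} (M : Set (Euc d)) (hM : IsCompact M)
    (l lam : ℝ) (hl : 0 < l) (hlam : 1 < lam) (S : Set (Euc d))
    (hSc : IsCompact S) (hSconn : IsConnected S) :
    (∀ S' : Set (Euc d), IsCompact S' → IsConnected S' →
      penalized M l lam S ≤ penalized M l lam S') ↔ IsMDM M l S :=
  penalized_equiv_mdm_general M hM l lam hlam S hSc hSconn

end
end
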